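/- arXiv:2410.21815 — 4 statements merged into one kernel-verified Lean document; each statement's English description precedes it below -/
import Mathlib

section
/- With subsets sampled from the Shapley kernel distribution, the off-diagonal entry of the second-moment matrix E[s sᵀ] equals (Σ_{k=2}^{d-1} (k-1)/(d(d-k))) / (Σ_{k=1}^{d-1} (d-1)/(k(d-k))). -/
open Finset

/-- The (normalized) Shapley kernel distribution over subsets `s` with
`0 < |s| < d`: `p(s) = Q⁻¹ (d-1)/(C(d,|s|)·|s|·(d-|s|))`. -/
noncomputable def shapleyKernel (d : ℕ) (s : Finset (Fin d)) : ℝ :=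
  (((d : ℝ) - 1) / ((Nat.choose d s.card : ℝ) * s.card * ((d : ℝ) - s.card))) /
    ∑ k ∈ Finset.Icc 1 (d - 1), ((d : ℝ) - 1) / (k * ((d : ℝ) - k))

lemma count_lemma (d k : ℕ) (i j : Fin d) (hij : i ≠ j) (hk2 : 2 ≤ k) :
    (Finset.univ.filter (fun s : Finset (Fin d) => s.card = k ∧ i ∈ s ∧ j ∈ s)).card
      = Nat.choose (d - 2) (k - 2) := by
  have hijcard : ({i, j} : Finset (Fin d)).card = 2 := by
    rw [Finset.card_insert_of_notMem (by simpa using hij), Finset.card_singleton]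
  have hcard : ((Finset.univ : Finset (Fin d)) \ {i, j}).card = d - 2 := by
    rw [Finset.card_sdiff_of_subset (Finset.subset_univ _), hijcard, Finset.card_univ, Fintype.card_fin]
  rw [← hcard, ← Finset.card_powersetCard (k - 2) ((Finset.univ : Finset (Fin d)) \ {i, j})]
  apply Finset.card_bij (fun s _ => s \ {i, j})
  · intro s hs
    simp only [Finset.mem_filter, Finset.mem_univ, true_and] at hs
    obtain ⟨hc, hi, hj⟩ := hs
    have hsub : ({i, j} : Finset (Fin d)) ⊆ s := by
      intro x hx; simp only [Finset.mem_insert, Finset.mem_singleton] at hx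
      rcases hx with rfl | rfl <;> assumption
    rw [Finset.mem_powersetCard]
    exact ⟨Finset.sdiff_subset_sdiff (Finset.subset_univ s) le_rfl,
      by rw [Finset.card_sdiff_of_subset hsub, hc, hijcard]⟩
  · intro s1 h1 s2 h2 h
    simp only [Finset.mem_filter, Finset.mem_univ, true_and] at h1 h2
    have hsub1 : ({i, j} : Finset (Fin d)) ⊆ s1 := by
      intro x hx; simp only [Finset.mem_insert, Finset.mem_singleton] at hx
      rcases hx with rfl | rfl; exacts [h1.2.1, h1.2.2]
    have hsub2 : ({i, j} : Finset (Fin d)) ⊆ s2 := by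
      intro x hx; simp only [Finset.mem_insert, Finset.mem_singleton] at hx
      rcases hx with rfl | rfl; exacts [h2.2.1, h2.2.2]
    rw [← Finset.sdiff_union_of_subset hsub1, ← Finset.sdiff_union_of_subset hsub2, h]
  · intro t ht
    rw [Finset.mem_powersetCard] at ht
    obtain ⟨hsub, hc⟩ := ht
    have hdisj : Disjoint t ({i, j} : Finset (Fin d)) := by
      refine Finset.disjoint_left.mpr fun x hx hx' => ?_
      have := hsub hx
      simp only [Finset.mem_sdiff] at this
      exact this.2 hx'
    refine ⟨t ∪ {i, j}, ?_, ?_⟩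
    · simp only [Finset.mem_filter, Finset.mem_univ, true_and]
      refine ⟨?_, ?_, ?_⟩
      · rw [Finset.card_union_of_disjoint hdisj, hc, hijcard]; omega
      · exact Finset.mem_union_right _ (by simp)
      · exact Finset.mem_union_right _ (by simp)
    · rw [Finset.union_sdiff_cancel_right hdisj]

lemma key_nat (m n : ℕ) :
    (m + 2) * ((m + 1) * Nat.choose m n)
      = Nat.choose (m + 2) (n + 2) * ((n + 2) * (n + 1)) := by
  have h1 : (m + 1) * Nat.choose m n = Nat.choose (m + 1) (n + 1) * (n + 1) :=
    Nat.add_one_mul_choose_eq m n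
  have h2 : (m + 2) * Nat.choose (m + 1) (n + 1) = Nat.choose (m + 2) (n + 2) * (n + 2) :=
    Nat.add_one_mul_choose_eq (m + 1) (n + 1)
  rw [h1, ← mul_assoc, h2, mul_assoc]

/-- Off-diagonal entry of the second-moment matrix `E[s sᵀ]` under the Shapley
kernel distribution: for `i ≠ j`,
`A_{ij} = Pr(s_i = s_j = 1) = (∑_{k=2}^{d-1} (k-1)/(d(d-k))) / (∑_{k=1}^{d-1} (d-1)/(k(d-k)))`. -/
theorem stmt_2 (d : ℕ) (hd : 3 ≤ d) (i j : Fin d) (hij : i ≠ j) :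
    ∑ s ∈ Finset.univ.filter
        (fun s : Finset (Fin d) => 0 < s.card ∧ s.card < d ∧ i ∈ s ∧ j ∈ s),
      shapleyKernel d s =
    (∑ k ∈ Finset.Icc 2 (d - 1), ((k : ℝ) - 1) / (d * ((d : ℝ) - k))) /
      (∑ k ∈ Finset.Icc 1 (d - 1), ((d : ℝ) - 1) / (k * ((d : ℝ) - k))) := by
  unfold shapleyKernel
  rw [← Finset.sum_div]
  congr 1
  -- group by cardinality
  set S := Finset.univ.filter
      (fun s : Finset (Fin d) => 0 < s.card ∧ s.card < d ∧ i ∈ s ∧ j ∈ s) with hS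
  have hmaps : ∀ s ∈ S, s.card ∈ Finset.Icc 2 (d - 1) := by
    intro s hs
    simp only [hS, Finset.mem_filter, Finset.mem_univ, true_and] at hs
    obtain ⟨h0, hlt, hi, hj⟩ := hs
    have h2 : 2 ≤ s.card := by
      have : ({i, j} : Finset (Fin d)) ⊆ s := by
        intro x hx; simp only [Finset.mem_insert, Finset.mem_singleton] at hx
        rcases hx with rfl | rfl <;> assumption
      have := Finset.card_le_card this
      rwa [Finset.card_insert_of_notMem (by simpa using hij), Finset.card_singleton] at this
    rw [Finset.mem_Icc]; omega
  rw [← Finset.sum_fiberwise_of_maps_to hmaps]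
  apply Finset.sum_congr rfl
  intro k hk
  rw [Finset.mem_Icc] at hk
  obtain ⟨hk2, hkd⟩ := hk
  have hfib : S.filter (fun s => s.card = k)
      = Finset.univ.filter (fun s : Finset (Fin d) => s.card = k ∧ i ∈ s ∧ j ∈ s) := by
    ext s
    simp only [hS, Finset.mem_filter, Finset.mem_univ, true_and]
    constructor
    · rintro ⟨⟨h0, hlt, hi, hj⟩, hc⟩; exact ⟨hc, hi, hj⟩
    · rintro ⟨hc, hi, hj⟩; exact ⟨⟨by omega, by omega, hi, hj⟩, hc⟩
  have hconst : ∀ s ∈ S.filter (fun s => s.card = k),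
      ((d : ℝ) - 1) / ((Nat.choose d s.card : ℝ) * s.card * ((d : ℝ) - s.card))
        = ((d : ℝ) - 1) / ((Nat.choose d k : ℝ) * k * ((d : ℝ) - k)) := by
    intro s hs
    rw [Finset.mem_filter] at hs
    rw [hs.2]
  rw [Finset.sum_congr rfl hconst, Finset.sum_const, hfib, count_lemma d k i j hij hk2,
    nsmul_eq_mul]
  -- numeric identity
  have hkle : k ≤ d := by omega
  obtain ⟨n, rfl⟩ : ∃ n, k = n + 2 := ⟨k - 2, by omega⟩
  obtain ⟨m, rfl⟩ : ∃ m, d = m + 2 := ⟨d - 2, by omega⟩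
  have hnm : n ≤ m := by omega
  have hkey := key_nat m n
  have hchoosepos : 0 < Nat.choose (m + 2) (n + 2) := Nat.choose_pos (by omega)
  have hdk : ((m : ℝ) + 2) - ((n : ℝ) + 2) = ((m - n : ℕ) : ℝ) := by
    push_cast [Nat.cast_sub hnm]; ring
  have hdkpos : (0 : ℝ) < ((m : ℝ) + 2) - ((n : ℝ) + 2) := by
    have : n < m := by omega
    have : (n : ℝ) < m := by exact_mod_cast this
    linarith
  have hsimp : (Nat.choose (m + 2 - 2) (n + 2 - 2) : ℝ) = (Nat.choose m n : ℝ) := by norm_num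
  push_cast
  have hcast : ((m : ℝ) + 2) * (((m : ℝ) + 1) * (Nat.choose m n : ℝ))
      = ((Nat.choose (m + 2) (n + 2) : ℝ)) * (((n : ℝ) + 2) * ((n : ℝ) + 1)) := by
    exact_mod_cast hkey
  rw [mul_div_assoc', div_eq_div_iff (by positivity) (by positivity)]
  linear_combination ((m : ℝ) + 2 - ((n : ℝ) + 2)) * hcast
end

section
/- The difference between diagonal and off-diagonal entries of the Shapley-kernel second-moment matrix equals 1/(2·H_{d-1}), where H_{d-1} is the (d-1)-th harmonic number. Consequently, the minimum eigenvalue of A = E[s sᵀ] is 1/(2·H_{d-1}). -/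
open Finset
open scoped Matrix

/-- The second-moment matrix `A = E_{s∼p}[s sᵀ]` of the Shapley kernel
distribution, `A_{ij} = Pr(s_i = 1 ∧ s_j = 1)`. -/
noncomputable def secondMoment (d : ℕ) : Matrix (Fin d) (Fin d) ℝ :=
  fun i j => ∑ s ∈ Finset.univ.filter
      (fun s : Finset (Fin d) => 0 < s.card ∧ s.card < d ∧ i ∈ s ∧ j ∈ s),
    shapleyKernel d s



-- nat binomial identity
lemma aux_nat_id (d k : ℕ) (hd : 2 ≤ d) (hk1 : 1 ≤ k) (hk2 : k ≤ d - 1) :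
    d.choose k * k * (d - k) = d * (d - 1) * (d - 2).choose (k - 1) := by
  obtain ⟨j, rfl⟩ : ∃ j, k = j + 1 := ⟨k - 1, by omega⟩
  obtain ⟨m, rfl⟩ : ∃ m, d = m + 2 := ⟨d - 2, by omega⟩
  have h1 : (m + 2) * (m + 1).choose j = (m + 2).choose (j + 1) * (j + 1) :=
    Nat.add_one_mul_choose_eq (m + 1) j
  have h2 : (m + 1).choose (j + 1) * (j + 1) = (m + 1).choose j * (m + 1 - j) :=
    Nat.choose_succ_right_eq (m + 1) j
  have h3 : (m + 1) * m.choose j = (m + 1).choose (j + 1) * (j + 1) :=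
    Nat.add_one_mul_choose_eq m j
  -- (m+1) * m.choose j = (m+1).choose j * (m+1-j)
  have h4 : (m + 1) * m.choose j = (m + 1).choose j * (m + 1 - j) := by rw [h3, h2]
  simp only [Nat.add_sub_cancel]
  -- goal : (m+2).choose (j+1) * (j+1) * (m+2-(j+1)) = (m+2)*(m+1)* m.choose j
  have hj : j ≤ m := by omega
  have : m + 2 - (j + 1) = m + 1 - j := by omega
  rw [this, ← h1]
  calc (m+2) * (m+1).choose j * (m+1-j) = (m+2) * ((m+1) * m.choose j) := by
        rw [mul_assoc, ← h4]
    _ = (m+2) * (m+1) * m.choose j := by ring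

-- counting lemma
lemma aux_count (d : ℕ) (i j : Fin d) (hij : i ≠ j) (k : ℕ) (hk1 : 1 ≤ k) :
    (Finset.univ.filter (fun s : Finset (Fin d) => i ∈ s ∧ j ∉ s ∧ s.card = k)).card
      = (d - 2).choose (k - 1) := by
  have hcard : ((Finset.univ.erase i).erase j).card = d - 2 := by
    rw [card_erase_of_mem (by simp [Ne.symm hij]), card_erase_of_mem (by simp)]
    simp [card_univ]
    omega
  rw [← hcard, ← Finset.card_powersetCard]
  apply Finset.card_nbij' (fun s => s.erase i) (fun t => insert i t)
  · intro s hs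
    simp only [mem_coe, mem_filter, mem_univ, true_and] at hs
    obtain ⟨his, hjs, hcs⟩ := hs
    rw [Finset.mem_coe, Finset.mem_powersetCard]
    constructor
    · intro x hx
      simp only [mem_erase] at hx ⊢
      exact ⟨fun h => hjs (h ▸ hx.2), hx.1, mem_univ x⟩
    · rw [card_erase_of_mem his, hcs]
  · intro t ht
    rw [Finset.mem_coe, Finset.mem_powersetCard] at ht
    obtain ⟨hsub, hct⟩ := ht
    have hit : i ∉ t := fun h => by simpa using (hsub h)
    have hjt : j ∉ t := fun h => by
      have := hsub h; simp only [mem_erase] at this; exact this.1 rfl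
    simp only [mem_coe, mem_filter, mem_univ, true_and]
    refine ⟨mem_insert_self i t, ?_, ?_⟩
    · simp only [mem_insert]
      rintro (h | h)
      · exact hij h.symm
      · exact hjt h
    · rw [card_insert_of_notMem hit, hct]; omega
  · intro s hs
    simp only [mem_coe, mem_filter, mem_univ, true_and] at hs
    exact Finset.insert_erase hs.1
  · intro t ht
    rw [Finset.mem_coe, Finset.mem_powersetCard] at ht
    have hit : i ∉ t := fun h => by simpa using (ht.1 h)
    exact Finset.erase_insert hit

-- reflection
lemma aux_reflect (d : ℕ) (hd : 2 ≤ d) :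
    ∑ k ∈ Finset.Icc 1 (d-1), (1:ℝ)/((d:ℝ) - k) = ∑ k ∈ Finset.Icc 1 (d-1), (1:ℝ)/(k:ℝ) := by
  apply Finset.sum_nbij' (fun k => d - k) (fun k => d - k)
  · intro a ha; simp only [Finset.mem_Icc] at ha ⊢; omega
  · intro a ha; simp only [Finset.mem_Icc] at ha ⊢; omega
  · intro a ha; simp only [Finset.mem_Icc] at ha; omega
  · intro a ha; simp only [Finset.mem_Icc] at ha; omega
  · intro a ha
    simp only [Finset.mem_Icc] at ha
    have : ((d - a : ℕ) : ℝ) = (d : ℝ) - a := by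
      have : a ≤ d := by omega
      push_cast [this]; ring
    rw [this]

lemma aux_H_pos (d : ℕ) (hd : 2 ≤ d) : 0 < ∑ k ∈ Finset.Icc 1 (d-1), (1:ℝ)/k := by
  apply Finset.sum_pos
  · intro k hk
    simp only [Finset.mem_Icc] at hk
    have : (0:ℝ) < k := by exact_mod_cast hk.1
    positivity
  · exact ⟨1, by simp only [Finset.mem_Icc]; omega⟩

lemma aux_Q_pos (d : ℕ) (hd : 2 ≤ d) :
    0 < ∑ k ∈ Finset.Icc 1 (d-1), ((d:ℝ)-1)/(k*((d:ℝ)-k)) := by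
  apply Finset.sum_pos
  · intro k hk
    simp only [Finset.mem_Icc] at hk
    have h1 : (0:ℝ) < (d:ℝ) - 1 := by
      have : (2:ℝ) ≤ d := by exact_mod_cast hd
      linarith
    have h2 : (0:ℝ) < k := by exact_mod_cast hk.1
    have h3 : (0:ℝ) < (d:ℝ) - k := by
      have : (k:ℝ) < d := by exact_mod_cast (show k < d by omega)
      linarith
    positivity
  · exact ⟨1, by simp only [Finset.mem_Icc]; omega⟩

lemma aux_Q_eq (d : ℕ) (hd : 2 ≤ d) :
    ∑ k ∈ Finset.Icc 1 (d-1), ((d:ℝ)-1)/(k*((d:ℝ)-k))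
      = 2*((d:ℝ)-1)/d * ∑ k ∈ Finset.Icc 1 (d-1), (1:ℝ)/k := by
  have step : ∀ k ∈ Finset.Icc 1 (d-1),
      ((d:ℝ)-1)/(k*((d:ℝ)-k)) = ((d:ℝ)-1)/d * ((1:ℝ)/k + 1/((d:ℝ)-k)) := by
    intro k hk
    simp only [Finset.mem_Icc] at hk
    have h2 : (k:ℝ) ≠ 0 := Nat.cast_ne_zero.mpr (by omega)
    have h3 : (d:ℝ) - k ≠ 0 := by
      have : (k:ℝ) < d := by exact_mod_cast (show k < d by omega)
      linarith
    have hd0 : (d:ℝ) ≠ 0 := by positivity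
    field_simp
    ring
  rw [Finset.sum_congr rfl step, ← Finset.mul_sum, Finset.sum_add_distrib, aux_reflect d hd]
  ring

lemma aux_diff (d : ℕ) (hd : 2 ≤ d) (i j : Fin d) (hij : i ≠ j) :
    secondMoment d i i - secondMoment d i j =
      1 / (2 * ∑ k ∈ Finset.Icc 1 (d - 1), (1 : ℝ) / k) := by
  have hHpos := aux_H_pos d hd
  have hQpos := aux_Q_pos d hd
  have hQne : (∑ k ∈ Finset.Icc 1 (d-1), ((d:ℝ)-1)/(k*((d:ℝ)-k))) ≠ 0 := ne_of_gt hQpos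
  have hHne : (∑ k ∈ Finset.Icc 1 (d-1), (1:ℝ)/k) ≠ 0 := ne_of_gt hHpos
  have hdR : (2:ℝ) ≤ d := by exact_mod_cast hd
  have hd0 : (d:ℝ) ≠ 0 := by positivity
  have hd1 : (d:ℝ) - 1 ≠ 0 := by linarith
  -- step 1: the difference is the sum over s with i ∈ s, j ∉ s
  have hii : secondMoment d i i
      = ∑ s ∈ Finset.univ.filter
          (fun s : Finset (Fin d) => 0 < s.card ∧ s.card < d ∧ i ∈ s),
        shapleyKernel d s := by
    unfold secondMoment
    congr 1
    apply Finset.filter_congr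
    intro s _
    tauto
  have hsplit := Finset.sum_filter_add_sum_filter_not
    (Finset.univ.filter (fun s : Finset (Fin d) => 0 < s.card ∧ s.card < d ∧ i ∈ s))
    (fun s => j ∈ s) (shapleyKernel d)
  rw [Finset.filter_filter, Finset.filter_filter] at hsplit
  have e1 : Finset.univ.filter
        (fun s : Finset (Fin d) => (0 < s.card ∧ s.card < d ∧ i ∈ s) ∧ j ∈ s)
      = Finset.univ.filter
        (fun s : Finset (Fin d) => 0 < s.card ∧ s.card < d ∧ i ∈ s ∧ j ∈ s) := by
    apply Finset.filter_congr; intro s _; tauto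
  rw [e1] at hsplit
  have hdiff : secondMoment d i i - secondMoment d i j
      = ∑ s ∈ Finset.univ.filter
          (fun s : Finset (Fin d) => (0 < s.card ∧ s.card < d ∧ i ∈ s) ∧ j ∉ s),
        shapleyKernel d s := by
    rw [hii, ← hsplit]
    unfold secondMoment
    ring
  rw [hdiff]
  -- step 2: group by cardinality
  have hmaps : ∀ s ∈ Finset.univ.filter
      (fun s : Finset (Fin d) => (0 < s.card ∧ s.card < d ∧ i ∈ s) ∧ j ∉ s),
      s.card ∈ Finset.Icc 1 (d-1) := by
    intro s hs
    simp only [Finset.mem_filter] at hs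
    simp only [Finset.mem_Icc]
    omega
  rw [← Finset.sum_fiberwise_of_maps_to hmaps (shapleyKernel d)]
  -- step 3: inner sums
  have inner : ∀ k ∈ Finset.Icc 1 (d-1),
      (∑ s ∈ (Finset.univ.filter
          (fun s : Finset (Fin d) => (0 < s.card ∧ s.card < d ∧ i ∈ s) ∧ j ∉ s)).filter
          (fun s => s.card = k),
        shapleyKernel d s)
      = 1/((d:ℝ) * ∑ k ∈ Finset.Icc 1 (d-1), ((d:ℝ)-1)/(k*((d:ℝ)-k))) := by
    intro k hk
    simp only [Finset.mem_Icc] at hk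
    have efib : (Finset.univ.filter
          (fun s : Finset (Fin d) => (0 < s.card ∧ s.card < d ∧ i ∈ s) ∧ j ∉ s)).filter
          (fun s => s.card = k)
        = Finset.univ.filter (fun s : Finset (Fin d) => i ∈ s ∧ j ∉ s ∧ s.card = k) := by
      rw [Finset.filter_filter]
      apply Finset.filter_congr
      intro s _
      constructor
      · rintro ⟨⟨⟨_, _, h3⟩, h4⟩, h5⟩; exact ⟨h3, h4, h5⟩
      · rintro ⟨h1, h2, h3⟩
        refine ⟨⟨⟨?_, ?_, h1⟩, h2⟩, h3⟩ <;> omega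
    rw [efib]
    have hval : ∀ s ∈ Finset.univ.filter
        (fun s : Finset (Fin d) => i ∈ s ∧ j ∉ s ∧ s.card = k),
        shapleyKernel d s
          = (((d:ℝ)-1) / ((Nat.choose d k : ℝ) * k * ((d:ℝ) - k)))
              / ∑ k ∈ Finset.Icc 1 (d-1), ((d:ℝ)-1)/(k*((d:ℝ)-k)) := by
      intro s hs
      simp only [Finset.mem_filter] at hs
      unfold shapleyKernel
      rw [hs.2.2.2]
    rw [Finset.sum_congr rfl hval, Finset.sum_const, aux_count d i j hij k hk.1,
      nsmul_eq_mul]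
    -- arithmetic with the binomial identity
    have key : (d.choose k : ℝ) * k * ((d:ℝ) - k)
        = (d:ℝ) * ((d:ℝ)-1) * ((d-2).choose (k-1) : ℝ) := by
      have hnat := aux_nat_id d k hd hk.1 hk.2
      have h1 : ((d.choose k * k * (d-k) : ℕ) : ℝ)
          = ((d * (d-1) * (d-2).choose (k-1) : ℕ) : ℝ) := by exact_mod_cast hnat
      push_cast [Nat.cast_sub (show k ≤ d by omega), Nat.cast_sub (show 1 ≤ d by omega)] at h1
      linarith
    have hC : ((d-2).choose (k-1) : ℝ) ≠ 0 := by
      have : 0 < (d-2).choose (k-1) := Nat.choose_pos (by omega)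
      exact_mod_cast this.ne'
    rw [key]
    field_simp
  rw [Finset.sum_congr rfl inner, Finset.sum_const, Nat.card_Icc, nsmul_eq_mul]
  -- final arithmetic
  rw [aux_Q_eq d hd]
  have hcast : ((d - 1 + 1 - 1 : ℕ) : ℝ) = (d:ℝ) - 1 := by
    push_cast [Nat.cast_sub (show 1 ≤ d by omega)]
    ring
  rw [hcast]
  field_simp

lemma aux_perm (d : ℕ) (σ : Equiv.Perm (Fin d)) (i j : Fin d) :
    secondMoment d (σ i) (σ j) = secondMoment d i j := by
  unfold secondMoment
  apply Finset.sum_equiv (Equiv.finsetCongr σ.symm)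
  · intro s
    simp only [Finset.mem_filter, Finset.mem_univ, true_and, Equiv.finsetCongr_apply,
      Finset.card_map, Finset.mem_map_equiv, Equiv.symm_symm]
  · intro s _
    unfold shapleyKernel
    simp only [Equiv.finsetCongr_apply, Finset.card_map]

lemma aux_exists_perm (d : ℕ) (a b i j : Fin d) (hab : a ≠ b) (hij : i ≠ j) :
    ∃ σ : Equiv.Perm (Fin d), σ a = i ∧ σ b = j := by
  classical
  set τ := Equiv.swap a i with hτ
  have hτa : τ a = i := Equiv.swap_apply_left a i
  have hui : τ b ≠ i := by
    rw [← hτa]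
    exact fun h => hab (τ.injective h).symm
  refine ⟨τ.trans (Equiv.swap (τ b) j), ?_, ?_⟩
  · simp only [Equiv.trans_apply, hτa]
    exact Equiv.swap_apply_of_ne_of_ne (Ne.symm hui) hij
  · simp only [Equiv.trans_apply]
    exact Equiv.swap_apply_left (τ b) j

lemma aux_const (d : ℕ) (hd : 2 ≤ d) :
    ∀ i j : Fin d, secondMoment d i j =
      if i = j then secondMoment d ⟨0, by omega⟩ ⟨0, by omega⟩
      else secondMoment d ⟨0, by omega⟩ ⟨1, by omega⟩ := by
  intro i j
  have hab : (⟨0, by omega⟩ : Fin d) ≠ ⟨1, by omega⟩ := by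
    simp [Fin.ext_iff]
  by_cases h : i = j
  · subst h
    rw [if_pos rfl]
    have := aux_perm d (Equiv.swap (⟨0, by omega⟩ : Fin d) i) ⟨0, by omega⟩ ⟨0, by omega⟩
    rw [Equiv.swap_apply_left] at this
    exact this
  · rw [if_neg h]
    obtain ⟨σ, hσa, hσb⟩ := aux_exists_perm d ⟨0, by omega⟩ ⟨1, by omega⟩ i j hab h
    have := aux_perm d σ ⟨0, by omega⟩ ⟨1, by omega⟩
    rw [hσa, hσb] at this
    exact this

lemma aux_nonneg (d : ℕ) (hd : 2 ≤ d) (i j : Fin d) : 0 ≤ secondMoment d i j := by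
  unfold secondMoment
  apply Finset.sum_nonneg
  intro s hs
  simp only [Finset.mem_filter] at hs
  unfold shapleyKernel
  apply div_nonneg
  · apply div_nonneg
    · have : (2:ℝ) ≤ d := by exact_mod_cast hd
      linarith
    · have h1 : (0:ℝ) ≤ (Nat.choose d s.card : ℝ) := by positivity
      have h2 : (0:ℝ) ≤ (s.card : ℝ) := by positivity
      have h3 : (0:ℝ) ≤ (d:ℝ) - s.card := by
        have : (s.card : ℝ) ≤ d := by exact_mod_cast (le_of_lt hs.2.2.1)
        linarith
      positivity
  · exact le_of_lt (aux_Q_pos d hd)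

/-- The difference between diagonal and off-diagonal entries of the
Shapley-kernel second-moment matrix equals `1/(2 H_{d-1})`, and consequently
the minimum eigenvalue of `A = E[s sᵀ]` is `1/(2 H_{d-1})`. -/
theorem stmt_3 (d : ℕ) (hd : 2 ≤ d) :
    (∀ i j : Fin d, i ≠ j →
        secondMoment d i i - secondMoment d i j =
          1 / (2 * ∑ k ∈ Finset.Icc 1 (d - 1), (1 : ℝ) / k)) ∧
      IsLeast {μ : ℝ | Module.End.HasEigenvalue (Matrix.toLin' (secondMoment d)) μ}
        (1 / (2 * ∑ k ∈ Finset.Icc 1 (d - 1), (1 : ℝ) / k)) := by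
  have hHpos := aux_H_pos d hd
  set μ₀ : ℝ := 1 / (2 * ∑ k ∈ Finset.Icc 1 (d-1), (1:ℝ)/k) with hμ₀
  set a : Fin d := ⟨0, by omega⟩ with ha
  set b : Fin d := ⟨1, by omega⟩ with hb
  have hab : a ≠ b := by simp [ha, hb, Fin.ext_iff]
  set β := secondMoment d a a with hβ
  set γ := secondMoment d a b with hγ
  have hconst : ∀ i j : Fin d, secondMoment d i j = if i = j then β else γ :=
    aux_const d hd
  have hβγ : β - γ = μ₀ := aux_diff d hd a b hab
  have hγ0 : 0 ≤ γ := aux_nonneg d hd a b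
  constructor
  · intro i j hij
    rw [hconst i i, hconst i j, if_pos rfl, if_neg hij, hβγ]
  constructor
  · -- μ₀ is an eigenvalue, with eigenvector single a 1 - single b 1
    set v : Fin d → ℝ := Pi.single a 1 - Pi.single b 1 with hv
    have hv0 : v ≠ 0 := by
      intro h
      have := congrFun h a
      simp [hv, Pi.single_apply, hab, Ne.symm hab] at this
    have hmv : (secondMoment d) *ᵥ v = μ₀ • v := by
      funext x
      have : ((secondMoment d) *ᵥ v) x
          = secondMoment d x a - secondMoment d x b := by
        simp [hv, Matrix.mulVec_sub, Matrix.mulVec_single]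
      rw [this, hconst x a, hconst x b]
      rcases eq_or_ne x a with rfl | hxa
      · rw [if_pos rfl, if_neg hab, hβγ]
        simp [hv, Pi.single_apply, hab, Ne.symm hab]
      rcases eq_or_ne x b with rfl | hxb
      · rw [if_neg (Ne.symm hab), if_pos rfl]
        simp [hv, Pi.single_apply, hab, Ne.symm hab, hxa]
        linarith [hβγ]
      · rw [if_neg hxa, if_neg hxb]
        simp [hv, Pi.single_apply, hxa, hxb]
    apply Module.End.hasEigenvalue_of_hasEigenvector (x := v)
    refine ⟨Module.End.mem_eigenspace_iff.mpr ?_, hv0⟩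
    rw [Matrix.toLin'_apply, hmv]
  · -- lower bound
    rintro μ hμ
    obtain ⟨v, hvmem, hv0⟩ := hμ.exists_hasEigenvector
    have hmv : (secondMoment d) *ᵥ v = μ • v := by
      rw [← Matrix.toLin'_apply]
      exact Module.End.mem_eigenspace_iff.mp hvmem
    set S := ∑ x, v x with hS
    set P := ∑ x, v x ^ 2 with hP
    have hPpos : 0 < P := by
      obtain ⟨x0, hx0⟩ := Function.ne_iff.mp hv0
      have hx0' : v x0 ≠ 0 := by simpa using hx0
      have h1 : (0:ℝ) < v x0 ^ 2 :=
        lt_of_le_of_ne (sq_nonneg _) (Ne.symm (pow_ne_zero 2 hx0'))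
      have h2 : ∀ x ∈ Finset.univ, (0:ℝ) ≤ v x ^ 2 := fun x _ => by positivity
      calc (0:ℝ) < v x0 ^ 2 := h1
        _ ≤ P := Finset.single_le_sum h2 (Finset.mem_univ x0)
    have hquad : μ * P = γ * S ^ 2 + (β - γ) * P := by
      have h1 : ∀ x, (secondMoment d *ᵥ v) x = γ * S + (β - γ) * v x := by
        intro x
        have : (secondMoment d *ᵥ v) x = ∑ y, secondMoment d x y * v y := rfl
        rw [this]
        have h2 : ∀ y, secondMoment d x y * v y
            = γ * v y + (if x = y then (β - γ) * v y else 0) := by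
          intro y
          rw [hconst x y]
          by_cases h : x = y <;> simp [h] <;> ring
        simp only [h2]
        rw [Finset.sum_add_distrib, ← Finset.mul_sum, Finset.sum_ite_eq]
        simp [hS]
      have h3 : ∑ x, (secondMoment d *ᵥ v) x * v x = γ * S ^ 2 + (β - γ) * P := by
        simp only [h1]
        rw [Finset.sum_congr rfl (fun x _ => by ring :
          ∀ x ∈ Finset.univ, (γ * S + (β - γ) * v x) * v x
            = γ * S * v x + (β - γ) * v x ^ 2)]
        rw [Finset.sum_add_distrib, ← Finset.mul_sum, ← Finset.mul_sum, ← hS, ← hP]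
        ring
      have h4 : ∑ x, (secondMoment d *ᵥ v) x * v x = μ * P := by
        rw [hmv]
        simp only [Pi.smul_apply, smul_eq_mul]
        rw [Finset.sum_congr rfl (fun x _ => by ring :
          ∀ x ∈ Finset.univ, μ * v x * v x = μ * v x ^ 2), ← Finset.mul_sum, ← hP]
      rw [← h4, h3]
    have hSq : 0 ≤ γ * S ^ 2 := mul_nonneg hγ0 (sq_nonneg S)
    have : (β - γ) * P ≤ μ * P := by rw [hquad]; linarith
    have := (mul_le_mul_iff_of_pos_right hPpos).mp this
    rw [hβγ] at this
    exact this
end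

section
/- If the expected squared Shapley regression loss of an estimator φ_θ exceeds the optimal loss (achieved by exact Shapley values) by at most ε for each input-output pair, then the expected Euclidean estimation error satisfies E[‖φ_θ(x,y) - φ_v(x|y)‖₂] ≤ √(2 H_{d-1} ε). -/
open Finset


lemma natid (e t : ℕ) (ht : t ≤ e) :
    (t+1) * ((e+1-t) * ((e+2).choose (t+1))) = (e+2)*((e+1)*(e.choose t)) := by
  have h1 : (e+2) * (e+1).choose t = (e+2).choose (t+1) * (t+1) := by
    simpa using Nat.add_one_mul_choose_eq (e+1) t
  have h2 : e.choose t * (e+1) = (e+1).choose t * (e+1-t) :=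
    Nat.choose_mul_succ_eq e t
  calc (t+1) * ((e+1-t) * ((e+2).choose (t+1)))
      = (e+1-t) * ((e+2).choose (t+1) * (t+1)) := by ring
    _ = (e+1-t) * ((e+2) * (e+1).choose t) := by rw [h1]
    _ = (e+2) * ((e+1).choose t * (e+1-t)) := by ring
    _ = (e+2) * (e.choose t * (e+1)) := by rw [h2]
    _ = (e+2)*((e+1)*(e.choose t)) := by ring

lemma perterm (d m : ℕ) (hd : 2 ≤ d) (hm : m ≤ d - 2) :
    ((d:ℝ)-1)/((d.choose (m+1) : ℝ) * (m+1) * ((d:ℝ) - (m+1))) * ((d-2).choose m : ℝ)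
      = 1/d := by
  obtain ⟨e, rfl⟩ : ∃ e, d = e + 2 := ⟨d - 2, by omega⟩
  have ht : m ≤ e := by omega
  have key := natid e m ht
  have h1 : ((e:ℝ)+2) - 1 = (e:ℝ) + 1 := by ring
  have h2 : ((e:ℝ)+2) - ((m:ℝ)+1) = ((e+1-m : ℕ) : ℝ) := by
    push_cast [Nat.cast_sub (by omega : m ≤ e+1)]; ring
  have hc : (0:ℝ) < ((e+2).choose (m+1) : ℝ) := by
    exact_mod_cast Nat.choose_pos (by omega)
  have hem : (0:ℝ) < ((e+1-m : ℕ) : ℝ) := by exact_mod_cast (by omega : 0 < e+1-m)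
  have key' : ((m:ℝ)+1) * (((e+1-m:ℕ):ℝ) * ((e+2).choose (m+1) : ℝ))
      = ((e:ℝ)+2)*(((e:ℝ)+1)*((e.choose m : ℝ))) := by exact_mod_cast key
  rw [show (e+2-2 : ℕ) = e by omega]
  push_cast
  rw [h2]
  rw [div_mul_eq_mul_div, div_eq_div_iff (by positivity) (by positivity)]
  push_cast at key' ⊢
  nlinarith [key']

lemma Dsum (d : ℕ) (hd : 2 ≤ d) (j k : Fin d) (hjk : j ≠ k) :
    ∑ s ∈ univ.filter (fun s : Finset (Fin d) =>
        (0 < s.card ∧ s.card < d) ∧ j ∈ s ∧ k ∉ s),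
      ((d:ℝ)-1)/((d.choose s.card : ℝ) * s.card * ((d:ℝ) - s.card))
      = ((d:ℝ)-1)/d := by
  set a : ℕ → ℝ := fun n => ((d:ℝ)-1)/((d.choose n : ℝ) * n * ((d:ℝ) - n)) with ha
  set V : Finset (Fin d) := (univ.erase j).erase k with hV
  have hjV : j ∉ V := by simp [hV]
  have hcardV : V.card = d - 2 := by
    rw [hV, card_erase_of_mem (by simp [Ne.symm hjk]), card_erase_of_mem (by simp)]
    simp
    omega
  have hfilter : univ.filter (fun s : Finset (Fin d) =>
        (0 < s.card ∧ s.card < d) ∧ j ∈ s ∧ k ∉ s)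
      = univ.filter (fun s : Finset (Fin d) => j ∈ s ∧ k ∉ s) := by
    apply filter_congr
    intro s _
    constructor
    · rintro ⟨_, h⟩; exact h
    · rintro ⟨hj, hk⟩
      refine ⟨⟨card_pos.2 ⟨j, hj⟩, ?_⟩, hj, hk⟩
      have hne : s ≠ univ := by rintro rfl; exact hk (mem_univ k)
      have := (card_lt_iff_ne_univ s).2 hne
      simpa using this
  rw [hfilter]
  have hbij : ∑ s ∈ univ.filter (fun s : Finset (Fin d) => j ∈ s ∧ k ∉ s),
      a s.card = ∑ u ∈ V.powerset, a (u.card + 1) := by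
    apply Finset.sum_nbij' (fun s => s.erase j) (fun u => insert j u)
    · intro s hs
      simp only [mem_filter, mem_univ, true_and] at hs
      rw [mem_powerset, hV]
      intro x hx
      rw [mem_erase] at hx
      simp only [mem_erase, mem_univ, and_true]
      exact ⟨fun h => hs.2 (h ▸ hx.2), hx.1⟩
    · intro u hu
      rw [mem_powerset] at hu
      simp only [mem_filter, mem_univ, true_and]
      refine ⟨mem_insert_self j u, ?_⟩
      intro hk
      rcases mem_insert.1 hk with h | h
      · exact hjk h.symm
      · have := hu h; simp [hV] at this
    · intro s hs
      simp only [mem_filter, mem_univ, true_and] at hs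
      exact insert_erase hs.1
    · intro u hu
      rw [mem_powerset] at hu
      exact erase_insert (fun h => hjV (hu h))
    · intro s hs
      simp only [mem_filter, mem_univ, true_and] at hs
      rw [card_erase_of_mem hs.1]
      congr 1
      have : 1 ≤ s.card := card_pos.2 ⟨j, hs.1⟩
      omega
  rw [hbij, Finset.sum_powerset V (fun u => a (u.card + 1)), hcardV]
  have hinner : ∀ m ∈ Finset.range (d - 2 + 1),
      ∑ u ∈ Finset.powersetCard m V, a (u.card + 1) = (1:ℝ)/d := by
    intro m hm
    rw [mem_range] at hm
    have : ∑ u ∈ Finset.powersetCard m V, a (u.card + 1)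
        = ∑ u ∈ Finset.powersetCard m V, a (m + 1) := by
      apply sum_congr rfl
      intro u hu
      rw [(mem_powersetCard.1 hu).2]
    rw [this, sum_const, card_powersetCard, hcardV, nsmul_eq_mul]
    have := perterm d m hd (by omega)
    rw [ha]
    push_cast
    rw [mul_comm]
    exact this
  rw [sum_congr rfl hinner, sum_const, card_range, nsmul_eq_mul]
  rw [show d - 2 + 1 = d - 1 by omega, Nat.cast_sub (by omega : 1 ≤ d)]
  push_cast
  ring

lemma double_ite {d : ℕ} (s : Finset (Fin d)) (X : Fin d → Fin d → ℝ) :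
    ∑ j : Fin d, ∑ k : Fin d, (if j ∈ s ∧ k ∉ s then X j k else 0)
      = ∑ j ∈ s, ∑ k ∈ sᶜ, X j k := by
  have inner : ∀ j : Fin d, ∑ k : Fin d, (if j ∈ s ∧ k ∉ s then X j k else 0)
      = if j ∈ s then ∑ k ∈ sᶜ, X j k else 0 := by
    intro j
    by_cases hj : j ∈ s
    · simp only [hj, true_and, if_true]
      have : ∀ k : Fin d, (k ∉ s) = (k ∈ sᶜ) := by intro k; simp
      simp only [this]
      rw [Finset.sum_ite_mem, univ_inter]
    · simp [hj]
  rw [Finset.sum_congr rfl (fun j _ => inner j), Finset.sum_ite_mem, univ_inter]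

lemma keyquad (d : ℕ) (hd : 2 ≤ d) (δ : Fin d → ℝ) (hδ : ∑ j, δ j = 0) :
    ∑ s ∈ univ.filter (fun s : Finset (Fin d) => 0 < s.card ∧ s.card < d),
      (((d:ℝ)-1)/((d.choose s.card : ℝ) * s.card * ((d:ℝ) - s.card))) * (∑ j ∈ s, δ j)^2
    = (((d:ℝ)-1)/d) * ∑ j, (δ j)^2 := by
  set a : ℕ → ℝ := fun n => ((d:ℝ)-1)/((d.choose n : ℝ) * n * ((d:ℝ) - n)) with ha
  set F := univ.filter (fun s : Finset (Fin d) => 0 < s.card ∧ s.card < d) with hF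
  set c : ℝ := ((d:ℝ)-1)/d with hc
  have step1 : ∀ s ∈ F, a s.card * (∑ j ∈ s, δ j)^2
      = -∑ j : Fin d, ∑ k : Fin d, (if j ∈ s ∧ k ∉ s then a s.card * (δ j * δ k) else 0) := by
    intro s _
    have hcompl : ∑ j ∈ s, δ j + ∑ j ∈ sᶜ, δ j = 0 := by
      rw [Finset.sum_add_sum_compl]; exact hδ
    have h2 : ∑ k ∈ sᶜ, δ k = -∑ j ∈ s, δ j := by linarith
    rw [double_ite s (fun j k => a s.card * (δ j * δ k))]
    have h3 : ∑ j ∈ s, ∑ k ∈ sᶜ, a s.card * (δ j * δ k)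
        = a s.card * ((∑ j ∈ s, δ j) * ∑ k ∈ sᶜ, δ k) := by
      conv_rhs => rw [Finset.sum_mul_sum]
      rw [Finset.mul_sum]
      exact Finset.sum_congr rfl fun _ _ => (Finset.mul_sum _ _ _).symm
    rw [h3, h2]; ring
  rw [Finset.sum_congr rfl step1, Finset.sum_neg_distrib]
  have hswap : ∑ s ∈ F, ∑ j : Fin d, ∑ k : Fin d,
        (if j ∈ s ∧ k ∉ s then a s.card * (δ j * δ k) else 0)
      = ∑ j : Fin d, ∑ k : Fin d, ∑ s ∈ F,
        (if j ∈ s ∧ k ∉ s then a s.card * (δ j * δ k) else 0) := by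
    rw [Finset.sum_comm]
    exact Finset.sum_congr rfl (fun j _ => Finset.sum_comm)
  rw [hswap]
  have hD : ∀ j k : Fin d, ∑ s ∈ F, (if j ∈ s ∧ k ∉ s then a s.card * (δ j * δ k) else 0)
      = if j = k then 0 else c * (δ j * δ k) := by
    intro j k
    rw [← Finset.sum_filter, hF, Finset.filter_filter]
    by_cases hjk : j = k
    · subst hjk
      rw [Finset.filter_false_of_mem, Finset.sum_empty, if_pos rfl]
      intro s _
      rintro ⟨_, hj, hk⟩
      exact hk hj
    · rw [if_neg hjk, ← Finset.sum_mul, Dsum d hd j k hjk]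
  rw [Finset.sum_congr rfl (fun j _ => Finset.sum_congr rfl (fun k _ => hD j k))]
  have expand : ∀ j k : Fin d, (if j = k then (0:ℝ) else c * (δ j * δ k))
      = c * (δ j * δ k) - (if j = k then c * (δ j * δ k) else 0) := by
    intro j k; split_ifs <;> ring
  simp only [expand, Finset.sum_sub_distrib]
  have e1 : ∑ j : Fin d, ∑ k : Fin d, c * (δ j * δ k)
      = c * ((∑ j : Fin d, δ j) * ∑ k : Fin d, δ k) := by
    conv_rhs => rw [Finset.sum_mul_sum]
    rw [Finset.mul_sum]
    exact Finset.sum_congr rfl fun _ _ => (Finset.mul_sum _ _ _).symm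
  have e2 : ∀ j : Fin d, ∑ k : Fin d, (if j = k then c * (δ j * δ k) else 0)
      = c * (δ j * δ j) := by
    intro j; simp
  rw [e1, hδ, Finset.sum_congr rfl (fun j _ => e2 j), ← Finset.mul_sum]
  have : ∑ j : Fin d, δ j * δ j = ∑ j : Fin d, (δ j)^2 :=
    Finset.sum_congr rfl fun j _ => (sq (δ j)).symm ▸ by ring
  rw [this]; ring

lemma Zval (d : ℕ) (hd : 2 ≤ d) :
    ∑ k ∈ Finset.Icc 1 (d-1), ((d:ℝ)-1)/(k*((d:ℝ)-k))
      = 2*(((d:ℝ)-1)/d) * ∑ k ∈ Finset.Icc 1 (d-1), (1:ℝ)/k := by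
  have hsplit : ∀ k ∈ Finset.Icc 1 (d-1),
      ((d:ℝ)-1)/(k*((d:ℝ)-k))
        = ((d:ℝ)-1)/d * (1/k) + ((d:ℝ)-1)/d * (1/((d:ℝ)-k)) := by
    intro k hk
    rw [mem_Icc] at hk
    have hk0 : (0:ℝ) < k := by exact_mod_cast hk.1
    have hdk : (0:ℝ) < (d:ℝ) - k := by
      have : k < d := by omega
      have := (Nat.cast_lt (α := ℝ)).2 this
      linarith
    have hd0 : (0:ℝ) < d := by positivity
    field_simp
    ring
  rw [Finset.sum_congr rfl hsplit, Finset.sum_add_distrib, ← Finset.mul_sum, ← Finset.mul_sum]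
  have hre : ∑ k ∈ Finset.Icc 1 (d-1), 1/((d:ℝ)-k)
      = ∑ k ∈ Finset.Icc 1 (d-1), (1:ℝ)/k := by
    apply Finset.sum_nbij' (fun k => d - k) (fun k => d - k)
    · intro a ha; rw [mem_Icc] at *; omega
    · intro a ha; rw [mem_Icc] at *; omega
    · intro a ha; rw [mem_Icc] at ha; omega
    · intro a ha; rw [mem_Icc] at ha; omega
    · intro a ha
      rw [mem_Icc] at ha
      have : ((d - a : ℕ) : ℝ) = (d:ℝ) - a := by
        rw [Nat.cast_sub (by omega)]
      rw [this]
  rw [hre]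
  ring

lemma aux7 (c H S : ℝ) (hc : 0 < c) (hH : 0 < H) : 1/(2*c*H) * (c*S) = S/(2*H) := by
  field_simp


/-- If the expected Shapley regression loss of an estimator `φθ` (satisfying the
efficiency constraint) exceeds the optimal loss achieved by the exact Shapley
values `φv` by at most `ε`, then the expected Euclidean estimation error is at
most `√(2 H_{d-1} ε)`. Here the pairs `(x,y)` range over a finite type `I` with
probability weights `w`, `g i s` plays the role of `g(x_s|y)`, the loss uses
the Shapley kernel weights, and `φv i` is the constrained minimizer. -/
theorem stmt_8 (d : ℕ) (hd : 2 ≤ d)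
    {I : Type*} [Fintype I] (w : I → ℝ) (hw0 : ∀ i, 0 ≤ w i) (hw1 : ∑ i, w i = 1)
    (g : I → Finset (Fin d) → ℝ)
    (L : I → EuclideanSpace ℝ (Fin d) → ℝ)
    (hL : ∀ i φ, L i φ =
      ∑ s ∈ Finset.univ.filter (fun s : Finset (Fin d) => 0 < s.card ∧ s.card < d),
        ((((d : ℝ) - 1) /
            ((Nat.choose d s.card : ℝ) * s.card * ((d : ℝ) - s.card))) /
          ∑ k ∈ Finset.Icc 1 (d - 1), ((d : ℝ) - 1) / (k * ((d : ℝ) - k))) *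
          (g i s - g i ∅ - ∑ j ∈ s, φ j) ^ 2)
    (φθ φv : I → EuclideanSpace ℝ (Fin d))
    (hφv_eff : ∀ i, ∑ j, φv i j = g i Finset.univ - g i ∅)
    (hφv_min : ∀ i, ∀ ψ : EuclideanSpace ℝ (Fin d),
      (∑ j, ψ j = g i Finset.univ - g i ∅) → L i (φv i) ≤ L i ψ)
    (hφθ_eff : ∀ i, ∑ j, φθ i j = g i Finset.univ - g i ∅)
    (ε : ℝ) (hε : 0 ≤ ε)
    (hexcess : ∑ i, w i * (L i (φθ i) - L i (φv i)) ≤ ε) :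
    ∑ i, w i * ‖φθ i - φv i‖ ≤
      Real.sqrt (2 * (∑ k ∈ Finset.Icc 1 (d - 1), (1 : ℝ) / k) * ε) := by
  classical
  set H : ℝ := ∑ k ∈ Finset.Icc 1 (d - 1), (1 : ℝ) / k with hH
  set Z : ℝ := ∑ k ∈ Finset.Icc 1 (d - 1), ((d : ℝ) - 1) / (k * ((d : ℝ) - k)) with hZdef
  set F := Finset.univ.filter (fun s : Finset (Fin d) => 0 < s.card ∧ s.card < d) with hF
  set a : ℕ → ℝ := fun n => ((d:ℝ)-1)/((d.choose n : ℝ) * n * ((d:ℝ) - n)) with ha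
  have hd0 : (0:ℝ) < d := by positivity
  have hc0 : (0:ℝ) < ((d:ℝ)-1)/d := by
    apply div_pos _ hd0
    have : (2:ℝ) ≤ d := by exact_mod_cast hd
    linarith
  have hHpos : 0 < H := by
    rw [hH]
    apply Finset.sum_pos
    · intro k hk
      rw [mem_Icc] at hk
      have : (0:ℝ) < k := by exact_mod_cast hk.1
      positivity
    · exact ⟨1, by rw [mem_Icc]; omega⟩
  have hZ : Z = 2*(((d:ℝ)-1)/d) * H := Zval d hd
  have hZpos : 0 < Z := by rw [hZ]; positivity
  -- pointwise excess identity
  have key : ∀ i, L i (φθ i) - L i (φv i) = ‖φθ i - φv i‖^2 / (2*H) := by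
    intro i
    set δ : Fin d → ℝ := fun j => φθ i j - φv i j with hδdef
    have hδsum : ∑ j, δ j = 0 := by
      rw [hδdef]
      simp only [Finset.sum_sub_distrib]
      rw [hφθ_eff i, hφv_eff i]
      ring
    set σ : Finset (Fin d) → ℝ := fun s => ∑ j ∈ s, δ j with hσ
    set r : Finset (Fin d) → ℝ := fun s => g i s - g i ∅ - ∑ j ∈ s, φv i j with hr
    set B : ℝ := ∑ s ∈ F, (a s.card / Z) * (r s * σ s) with hB
    set Q : ℝ := ∑ s ∈ F, (a s.card / Z) * (σ s)^2 with hQ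
    have happly : ∀ (t : ℝ) (j : Fin d),
        (φv i + t • (φθ i - φv i)) j = φv i j + t * δ j := by
      intro t j
      simp [hδdef]
    have hexp : ∀ t : ℝ, L i (φv i + t • (φθ i - φv i))
        = L i (φv i) - 2*t*B + t^2*Q := by
      intro t
      rw [hL, hL]
      have hterm : ∀ s ∈ F,
          ((a s.card / Z)) * (g i s - g i ∅ - ∑ j ∈ s, (φv i + t • (φθ i - φv i)) j) ^ 2
          = (a s.card / Z) * (g i s - g i ∅ - ∑ j ∈ s, φv i j) ^ 2
            - 2*t*((a s.card / Z) * (r s * σ s)) + t^2*((a s.card / Z) * (σ s)^2) := by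
        intro s _
        have hsum : ∑ j ∈ s, (φv i + t • (φθ i - φv i)) j
            = (∑ j ∈ s, φv i j) + t * σ s := by
          rw [Finset.sum_congr rfl (fun j _ => happly t j), Finset.sum_add_distrib,
            ← Finset.mul_sum]
        rw [hsum, hr, hσ]
        ring
      rw [Finset.sum_congr rfl hterm]
      rw [Finset.sum_add_distrib, Finset.sum_sub_distrib, ← Finset.mul_sum, ← Finset.mul_sum,
        hB, hQ]
    have hconstr : ∀ t : ℝ, ∑ j, (φv i + t • (φθ i - φv i)) j = g i Finset.univ - g i ∅ := by
      intro t
      rw [Finset.sum_congr rfl (fun j _ => happly t j), Finset.sum_add_distrib,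
        ← Finset.mul_sum, hδsum, hφv_eff i]
      ring
    have hQval : Q = (∑ j, (δ j)^2) / (2*H) := by
      rw [hQ]
      have : ∀ s ∈ F, (a s.card / Z) * (σ s)^2 = (1/Z) * (a s.card * (σ s)^2) := by
        intro s _; ring
      rw [Finset.sum_congr rfl this, ← Finset.mul_sum]
      have hk2 : ∑ s ∈ F, a s.card * σ s ^ 2 = (((d:ℝ)-1)/d) * ∑ j, (δ j)^2 := by
        simp only [ha, hσ]
        exact keyquad d hd δ hδsum
      rw [hk2, hZ]
      exact aux7 _ _ _ hc0 hHpos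
    have hQnn : 0 ≤ Q := by
      rw [hQval]
      exact div_nonneg (Finset.sum_nonneg fun j _ => sq_nonneg _) (by linarith)
    have hB0 : B = 0 := by
      have hQ1 : (0:ℝ) < Q + 1 := by linarith
      have hm := hφv_min i _ (hconstr (B/(Q+1)))
      rw [hexp (B/(Q+1))] at hm
      have ht : B/(Q+1)*(Q+1) = B := div_mul_cancel₀ _ (ne_of_gt hQ1)
      have h' : 0 ≤ -2*(B/(Q+1))*B + (B/(Q+1))^2*Q := by linarith
      have h2 : (B/(Q+1))^2*(Q+2) = -(-2*(B/(Q+1))*B + (B/(Q+1))^2*Q) := by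
        linear_combination 2*(B/(Q+1))*ht
      have h2' : (B/(Q+1))^2*(Q+2) ≤ 0 := by rw [h2]; linarith
      have h3 : (B/(Q+1))^2 ≤ 0 := by
        nlinarith [mul_nonneg (sq_nonneg (B/(Q+1))) hQnn]
      have h4 : B/(Q+1) = 0 := by
        have := le_antisymm h3 (sq_nonneg (B/(Q+1)))
        exact sq_eq_zero_iff.mp this
      rw [← ht, h4, zero_mul]
    have hθeq : φθ i = φv i + (1:ℝ) • (φθ i - φv i) := by
      rw [one_smul]; abel
    have hnorm : ‖φθ i - φv i‖^2 = ∑ j, (δ j)^2 := by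
      rw [EuclideanSpace.norm_eq, Real.sq_sqrt (by positivity)]
      refine Finset.sum_congr rfl fun j _ => ?_
      have : (φθ i - φv i) j = δ j := by simp [hδdef]
      rw [this, Real.norm_eq_abs, sq_abs]
    calc L i (φθ i) - L i (φv i)
        = L i (φv i + (1:ℝ) • (φθ i - φv i)) - L i (φv i) := by rw [← hθeq]
      _ = -2*B + Q := by rw [hexp 1]; ring
      _ = Q := by rw [hB0]; ring
      _ = ‖φθ i - φv i‖^2 / (2*H) := by rw [hQval, hnorm]
  -- aggregation
  have hwn : ∀ i, w i * ‖φθ i - φv i‖ = Real.sqrt (w i) * (Real.sqrt (w i) * ‖φθ i - φv i‖) := by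
    intro i
    rw [← mul_assoc, Real.mul_self_sqrt (hw0 i)]
  have hCS : (∑ i, w i * ‖φθ i - φv i‖)^2 ≤ ∑ i, w i * ‖φθ i - φv i‖^2 := by
    calc (∑ i, w i * ‖φθ i - φv i‖)^2
        = (∑ i, Real.sqrt (w i) * (Real.sqrt (w i) * ‖φθ i - φv i‖))^2 := by
          rw [Finset.sum_congr rfl (fun i _ => hwn i)]
      _ ≤ (∑ i, Real.sqrt (w i)^2) * ∑ i, (Real.sqrt (w i) * ‖φθ i - φv i‖)^2 :=
          Finset.sum_mul_sq_le_sq_mul_sq _ _ _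
      _ = (∑ i, w i) * ∑ i, w i * ‖φθ i - φv i‖^2 := by
          congr 1
          · exact Finset.sum_congr rfl fun i _ => Real.sq_sqrt (hw0 i)
          · apply Finset.sum_congr rfl
            intro i _
            rw [mul_pow, Real.sq_sqrt (hw0 i)]
      _ = ∑ i, w i * ‖φθ i - φv i‖^2 := by rw [hw1, one_mul]
  have hsum2 : ∑ i, w i * ‖φθ i - φv i‖^2 ≤ 2 * H * ε := by
    have h2Hne : (2*H) ≠ 0 := by
      have : (0:ℝ) < 2*H := by linarith
      exact ne_of_gt this
    have : ∀ i, w i * ‖φθ i - φv i‖^2 = (2*H) * (w i * (L i (φθ i) - L i (φv i))) := by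
      intro i
      calc w i * ‖φθ i - φv i‖^2
          = w i * (‖φθ i - φv i‖^2/(2*H) * (2*H)) := by rw [div_mul_cancel₀ _ h2Hne]
        _ = (2*H) * (w i * (‖φθ i - φv i‖^2/(2*H))) := by ring
        _ = (2*H) * (w i * (L i (φθ i) - L i (φv i))) := by rw [key i]
    rw [Finset.sum_congr rfl (fun i _ => this i), ← Finset.mul_sum]
    have h2H : 0 ≤ 2*H := by linarith
    exact mul_le_mul_of_nonneg_left hexcess h2H
  have hnn : 0 ≤ ∑ i, w i * ‖φθ i - φv i‖ :=
    Finset.sum_nonneg fun i _ => mul_nonneg (hw0 i) (norm_nonneg _)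
  calc ∑ i, w i * ‖φθ i - φv i‖
      = Real.sqrt ((∑ i, w i * ‖φθ i - φv i‖)^2) := (Real.sqrt_sq hnn).symm
    _ ≤ Real.sqrt (2 * H * ε) := by
        apply Real.sqrt_le_sqrt
        calc (∑ i, w i * ‖φθ i - φv i‖)^2 ≤ ∑ i, w i * ‖φθ i - φv i‖^2 := hCS
          _ ≤ 2 * H * ε := hsum2
end

section
/- For the least-squares characterization of Shapley values: the exact Shapley values φ_v minimize the constrained weighted least squares objective Σ_{0<1ᵀs<d} w(s)(v(s) - v(0) - sᵀφ)² subject to 1ᵀφ = v(1) - v(0), where w(s) = (d-1)/(C(d,1ᵀs)(1ᵀs)(d-1ᵀs)); moreover the minimizer is unique. -/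
open Finset

/-- The Shapley value of player `i` in the game `v : {0,1}^d → ℝ`. -/
noncomputable def shapley {d : ℕ} (v : Finset (Fin d) → ℝ) (i : Fin d) : ℝ :=
  (1 / d) * ∑ s ∈ Finset.univ.filter (fun s : Finset (Fin d) => i ∉ s),
    ((Nat.choose (d - 1) s.card : ℝ))⁻¹ * (v (insert i s) - v s)



namespace Stmt18

/-- `d * C(d-1,k) = (k+1) * C(d,k+1)` over ℝ. -/
lemma choose_id1 (d k : ℕ) (hd : 1 ≤ d) :
    (d : ℝ) * ((d - 1).choose k : ℕ) = (k + 1) * (d.choose (k + 1) : ℕ) := by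
  have h := Nat.add_one_mul_choose_eq (d - 1) k
  rw [Nat.sub_add_cancel hd] at h
  have h2 : ((d * (d-1).choose k : ℕ) : ℝ) = ((d.choose (k+1) * (k+1) : ℕ) : ℝ) := by
    exact_mod_cast h
  push_cast at h2
  linarith

/-- `(d - k) * C(d,k) = d * C(d-1,k)` over ℝ, for `k ≤ d`. -/
lemma choose_id2 (d k : ℕ) (hd : 1 ≤ d) (hk : k ≤ d) :
    ((d : ℝ) - k) * (d.choose k : ℕ) = (d : ℝ) * ((d - 1).choose k : ℕ) := by
  have h := Nat.choose_mul_succ_eq (d - 1) k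
  rw [Nat.sub_add_cancel hd] at h
  have h2 : (((d-1).choose k * d : ℕ) : ℝ) = ((d.choose k * (d - k) : ℕ) : ℝ) := by
    exact_mod_cast h
  rw [Nat.cast_mul, Nat.cast_mul, Nat.cast_sub hk] at h2
  push_cast at h2 ⊢
  linarith

end Stmt18

namespace Stmt18

/-- The Shapley kernel weight as a function of cardinality. -/
noncomputable def W (d m : ℕ) : ℝ :=
  ((d : ℝ) - 1) / ((d.choose m : ℕ) * m * ((d : ℝ) - m))

lemma hb_eq (d k : ℕ) (hd : 2 ≤ d) (hk : k ≤ d - 2) :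
    ((d - 1).choose k : ℝ) = (k + 1) * (d.choose (k + 1) : ℕ) / d := by
  have h1 := choose_id1 d k (by omega)
  have hd0 : (d : ℝ) ≠ 0 := by positivity
  field_simp
  linarith

lemma hc_eq (d k : ℕ) (hd : 2 ≤ d) (hk : k ≤ d - 2) :
    ((d - 1).choose (k + 1) : ℝ) = ((d : ℝ) - (k + 1)) * (d.choose (k + 1) : ℕ) / d := by
  have h1 := choose_id2 d (k + 1) (by omega) (by omega)
  have hd0 : (d : ℝ) ≠ 0 := by positivity
  push_cast at h1
  field_simp
  linarith

lemma ha_eq (d k : ℕ) (hd : 2 ≤ d) (hk : k ≤ d - 2) :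
    ((d - 2).choose k : ℝ) = ((d : ℝ) - 1 - k) * ((d - 1).choose k : ℕ) / ((d : ℝ) - 1) := by
  have h1 := choose_id2 (d - 1) k (by omega) (by omega)
  have hc : ((d - 1 : ℕ) : ℝ) = (d : ℝ) - 1 := by
    push_cast [Nat.cast_sub (by omega : 1 ≤ d)]; ring
  rw [hc] at h1
  have h2 : (d : ℕ) - 1 - 1 = d - 2 := by omega
  rw [h2] at h1
  have hd1 : (d : ℝ) - 1 ≠ 0 := by
    have : (2 : ℝ) ≤ d := by exact_mod_cast hd
    linarith
  field_simp
  linarith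

lemma choose_d_pos (d k : ℕ) (hk : k ≤ d) : (0 : ℝ) < (d.choose k : ℕ) := by
  exact_mod_cast Nat.choose_pos hk

/-- key per-cardinality identity relating kernel weight to Shapley coefficients. -/
lemma W_eq (d k : ℕ) (hd : 2 ≤ d) (hk : k ≤ d - 2) :
    W d (k + 1)
      = ((d : ℝ) - 1) / (d : ℝ) ^ 2 *
          (((d - 1).choose k : ℝ)⁻¹ + ((d - 1).choose (k + 1) : ℝ)⁻¹) := by
  have ha : (0 : ℝ) < (d.choose (k + 1) : ℕ) := choose_d_pos d (k + 1) (by omega)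
  have hk1 : (0 : ℝ) < (k : ℝ) + 1 := by positivity
  have hdk : (0 : ℝ) < (d : ℝ) - (k + 1) := by
    have : (k : ℝ) + 1 < d := by exact_mod_cast (by omega : k + 1 < d)
    linarith
  have hd0 : (0 : ℝ) < (d : ℝ) := by positivity
  rw [W, hb_eq d k hd hk, hc_eq d k hd hk]
  push_cast
  field_simp
  ring

lemma count_W (d k : ℕ) (hd : 2 ≤ d) (hk : k ≤ d - 2) :
    ((d - 2).choose k : ℝ) * W d (k + 1) = 1 / d := by
  have ha : (0 : ℝ) < (d.choose (k + 1) : ℕ) := choose_d_pos d (k + 1) (by omega)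
  have hk1 : (0 : ℝ) < (k : ℝ) + 1 := by positivity
  have hdk : (0 : ℝ) < (d : ℝ) - (k + 1) := by
    have : (k : ℝ) + 1 < d := by exact_mod_cast (by omega : k + 1 < d)
    linarith
  have hd0 : (0 : ℝ) < (d : ℝ) := by positivity
  have hd1 : (0 : ℝ) < (d : ℝ) - 1 := by
    have : (2 : ℝ) ≤ d := by exact_mod_cast hd
    linarith
  rw [W, ha_eq d k hd hk, hb_eq d k hd hk]
  push_cast
  field_simp
  ring

end Stmt18

namespace Stmt18
variable {d : ℕ}

lemma reindex_insert (i : Fin d) (f : Finset (Fin d) → ℝ) :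
    ∑ s ∈ univ.filter (fun s : Finset (Fin d) => i ∉ s), f (insert i s)
      = ∑ s ∈ univ.filter (fun s : Finset (Fin d) => i ∈ s), f s := by
  apply Finset.sum_nbij' (fun s => insert i s) (fun s => s.erase i)
  · intro a ha
    simp only [mem_filter, mem_univ, true_and] at ha ⊢
    exact mem_insert_self i a
  · intro a ha
    simp only [mem_filter, mem_univ, true_and] at ha ⊢
    exact notMem_erase i a
  · intro a ha
    simp only [mem_filter, mem_univ, true_and] at ha
    exact erase_insert ha
  · intro a ha
    simp only [mem_filter, mem_univ, true_and] at ha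
    exact insert_erase ha
  · intro a _
    rfl

lemma reindex_pair (i j : Fin d) (hij : i ≠ j) (f : Finset (Fin d) → ℝ) :
    ∑ s ∈ univ.filter (fun s : Finset (Fin d) => i ∈ s ∧ j ∉ s), f s
      = ∑ t ∈ univ.filter (fun t : Finset (Fin d) => i ∉ t ∧ j ∉ t), f (insert i t) := by
  symm
  apply Finset.sum_nbij' (fun t => insert i t) (fun s => s.erase i)
  · intro a ha
    simp only [mem_filter, mem_univ, true_and] at ha
    simp only [mem_filter, mem_univ, true_and, mem_insert]
    exact ⟨by simp, by rintro (h | h); exacts [hij h.symm, ha.2 h]⟩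
  · intro a ha
    simp only [mem_filter, mem_univ, true_and] at ha
    simp only [mem_filter, mem_univ, true_and]
    exact ⟨notMem_erase i a, fun h => ha.2 (mem_of_mem_erase h)⟩
  · intro a ha
    simp only [mem_filter, mem_univ, true_and] at ha
    exact erase_insert ha.1
  · intro a ha
    simp only [mem_filter, mem_univ, true_and] at ha
    exact insert_erase ha.1
  · intro a _
    rfl

lemma swap_mem (F : Finset (Fin d) → ℝ) :
    ∑ i : Fin d, ∑ s ∈ univ.filter (fun s : Finset (Fin d) => i ∈ s), F s
      = ∑ s : Finset (Fin d), (s.card : ℝ) * F s := by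
  simp only [Finset.sum_filter]
  rw [Finset.sum_comm]
  refine Finset.sum_congr rfl fun s _ => ?_
  rw [Finset.sum_ite_mem, Finset.univ_inter, Finset.sum_const, nsmul_eq_mul]

lemma swap_notmem (F : Finset (Fin d) → ℝ) :
    ∑ i : Fin d, ∑ s ∈ univ.filter (fun s : Finset (Fin d) => i ∉ s), F s
      = ∑ s : Finset (Fin d), ((d - s.card : ℕ) : ℝ) * F s := by
  simp only [Finset.sum_filter]
  rw [Finset.sum_comm]
  refine Finset.sum_congr rfl fun s _ => ?_
  have : ∀ i : Fin d, (if i ∉ s then F s else 0) = if i ∈ sᶜ then F s else 0 := by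
    intro i; simp [Finset.mem_compl]
  simp_rw [this]
  rw [Finset.sum_ite_mem, Finset.univ_inter, Finset.sum_const, nsmul_eq_mul,
    Finset.card_compl, Fintype.card_fin]

end Stmt18


namespace Stmt18

lemma coef_zero (d m : ℕ) (hd : 2 ≤ d) (h1 : 0 < m) (h2 : m < d) :
    (m : ℝ) * (((d - 1).choose (m - 1) : ℕ) : ℝ)⁻¹
      = ((d - m : ℕ) : ℝ) * (((d - 1).choose m : ℕ) : ℝ)⁻¹ := by
  have R1 := choose_id1 d (m - 1) (by omega)
  rw [show m - 1 + 1 = m by omega] at R1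
  rw [Nat.cast_sub h1] at R1
  have R1' : (d : ℝ) * ((d - 1).choose (m - 1) : ℕ) = m * (d.choose m : ℕ) := by
    rw [R1]; ring
  have R2 := choose_id2 d m (by omega) (by omega)
  have hb : (0 : ℝ) < (((d - 1).choose (m - 1) : ℕ) : ℝ) := choose_d_pos _ _ (by omega)
  have hc : (0 : ℝ) < (((d - 1).choose m : ℕ) : ℝ) := choose_d_pos _ _ (by omega)
  have hds : ((d - m : ℕ) : ℝ) = (d : ℝ) - m := by
    rw [Nat.cast_sub (le_of_lt h2)]
  have hd0 : (0 : ℝ) < (d : ℝ) := by exact_mod_cast (by omega : 0 < d)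
  have key : (d : ℝ) * (((d : ℝ) - m) * ((d - 1).choose (m - 1) : ℕ))
      = (d : ℝ) * ((m : ℝ) * ((d - 1).choose m : ℕ)) := by
    have : ((d : ℝ) - m) * ((d : ℝ) * ((d - 1).choose (m - 1) : ℕ))
        = ((d : ℝ) - m) * ((m : ℝ) * (d.choose m : ℕ)) := by rw [R1']
    calc (d : ℝ) * (((d : ℝ) - m) * ((d - 1).choose (m - 1) : ℕ))
        = ((d : ℝ) - m) * ((d : ℝ) * ((d - 1).choose (m - 1) : ℕ)) := by ring
      _ = ((d : ℝ) - m) * ((m : ℝ) * (d.choose m : ℕ)) := this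
      _ = (m : ℝ) * (((d : ℝ) - m) * (d.choose m : ℕ)) := by ring
      _ = (m : ℝ) * ((d : ℝ) * ((d - 1).choose m : ℕ)) := by rw [R2]
      _ = (d : ℝ) * ((m : ℝ) * ((d - 1).choose m : ℕ)) := by ring
  have key2 := mul_left_cancel₀ (ne_of_gt hd0) key
  rw [hds]
  field_simp
  linarith [key2]

lemma efficiency {d : ℕ} (hd : 2 ≤ d) (v : Finset (Fin d) → ℝ) :
    ∑ i, shapley v i = v univ - v ∅ := by
  have hd0 : (d : ℝ) ≠ 0 := by
    have h : (0 : ℝ) < d := by exact_mod_cast (by omega : 0 < d)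
    exact ne_of_gt h
  apply mul_left_cancel₀ hd0
  have lhs : (d : ℝ) * ∑ i, shapley v i
      = ∑ u : Finset (Fin d),
          ((u.card : ℝ) * (((d - 1).choose (u.card - 1) : ℕ) : ℝ)⁻¹
            - ((d - u.card : ℕ) : ℝ) * (((d - 1).choose u.card : ℕ) : ℝ)⁻¹) * v u := by
    rw [Finset.mul_sum]
    have hsh : ∀ i : Fin d, (d : ℝ) * shapley v i
        = ∑ s ∈ univ.filter (fun s : Finset (Fin d) => i ∉ s),
            (((d - 1).choose s.card : ℕ) : ℝ)⁻¹ * (v (insert i s) - v s) := by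
      intro i
      rw [shapley, ← mul_assoc, mul_one_div, div_self hd0, one_mul]
    simp_rw [hsh]
    have split : ∀ i : Fin d,
        (∑ s ∈ univ.filter (fun s : Finset (Fin d) => i ∉ s),
          (((d - 1).choose s.card : ℕ) : ℝ)⁻¹ * (v (insert i s) - v s))
        = (∑ u ∈ univ.filter (fun u : Finset (Fin d) => i ∈ u),
            (((d - 1).choose (u.card - 1) : ℕ) : ℝ)⁻¹ * v u)
          - ∑ s ∈ univ.filter (fun s : Finset (Fin d) => i ∉ s),
              (((d - 1).choose s.card : ℕ) : ℝ)⁻¹ * v s := by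
      intro i
      rw [← reindex_insert i (fun u => (((d - 1).choose (u.card - 1) : ℕ) : ℝ)⁻¹ * v u),
        ← Finset.sum_sub_distrib]
      apply Finset.sum_congr rfl
      intro s hs
      simp only [mem_filter, mem_univ, true_and] at hs
      rw [card_insert_of_notMem hs, Nat.add_sub_cancel]
      ring
    simp_rw [split]
    rw [Finset.sum_sub_distrib,
      swap_mem (fun u => (((d - 1).choose (u.card - 1) : ℕ) : ℝ)⁻¹ * v u),
      swap_notmem (fun s => (((d - 1).choose s.card : ℕ) : ℝ)⁻¹ * v s),
      ← Finset.sum_sub_distrib]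
    apply Finset.sum_congr rfl
    intro u _
    ring
  rw [lhs]
  have hne : (∅ : Finset (Fin d)) ≠ univ := by
    have : (univ : Finset (Fin d)).Nonempty := ⟨⟨0, by omega⟩, mem_univ _⟩
    exact fun h => (by simpa [← h] using this : (∅ : Finset (Fin d)).Nonempty).ne_empty rfl
  rw [← Finset.sum_subset (Finset.subset_univ ({∅, univ} : Finset (Finset (Fin d))))
    (by
      intro u _ hu
      simp only [Finset.mem_insert, Finset.mem_singleton] at hu
      push_neg at hu
      have h1 : 0 < u.card := Finset.card_pos.mpr hu.1
      have h2 : u.card < d := by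
        have := Finset.card_lt_iff_ne_univ u
        rw [Fintype.card_fin] at this
        exact this.mpr hu.2
      rw [coef_zero d u.card hd h1 h2]
      ring)]
  rw [Finset.sum_pair hne]
  have hcu : (univ : Finset (Fin d)).card = d := by
    rw [Finset.card_univ, Fintype.card_fin]
  simp only [Finset.card_empty, hcu, Nat.choose_zero_right, Nat.sub_self, Nat.choose_self,
    Nat.sub_zero, Nat.cast_zero, Nat.cast_one]
  ring

end Stmt18

namespace Stmt18
variable {d : ℕ}

lemma d_shapley (hd : 2 ≤ d) (v : Finset (Fin d) → ℝ) (i : Fin d) :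
    (d : ℝ) * shapley v i
      = ∑ s ∈ univ.filter (fun s : Finset (Fin d) => i ∉ s),
          (((d - 1).choose s.card : ℕ) : ℝ)⁻¹ * (v (insert i s) - v s) := by
  have hd0 : (d : ℝ) ≠ 0 := by
    have h : (0 : ℝ) < d := by exact_mod_cast (by omega : 0 < d)
    exact ne_of_gt h
  rw [shapley, ← mul_assoc, mul_one_div, div_self hd0, one_mul]

lemma filter_and_comm (p q : Finset (Fin d) → Prop) [DecidablePred p] [DecidablePred q] :
    univ.filter (fun t : Finset (Fin d) => p t ∧ q t)
      = univ.filter (fun t : Finset (Fin d) => q t ∧ p t) := by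
  apply Finset.filter_congr
  intro x _
  exact and_comm

lemma split_shapley (hd : 2 ≤ d) (v : Finset (Fin d) → ℝ) (i j : Fin d) (hij : i ≠ j) :
    (d : ℝ) * shapley v i
      = ∑ t ∈ univ.filter (fun t : Finset (Fin d) => i ∉ t ∧ j ∉ t),
          ((((d - 1).choose t.card : ℕ) : ℝ)⁻¹ * (v (insert i t) - v t)
            + (((d - 1).choose (t.card + 1) : ℕ) : ℝ)⁻¹
                * (v (insert i (insert j t)) - v (insert j t))) := by
  rw [d_shapley hd v i, Finset.sum_add_distrib]
  rw [← Finset.sum_filter_add_sum_filter_not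
    (univ.filter (fun s : Finset (Fin d) => i ∉ s)) (fun s => j ∉ s)]
  congr 1
  · rw [Finset.filter_filter]
  · rw [Finset.filter_filter]
    have h1 : univ.filter (fun s : Finset (Fin d) => i ∉ s ∧ ¬ j ∉ s)
        = univ.filter (fun s : Finset (Fin d) => j ∈ s ∧ i ∉ s) := by
      apply Finset.filter_congr
      intro x _
      constructor
      · rintro ⟨h1, h2⟩; exact ⟨not_not.mp h2, h1⟩
      · rintro ⟨h1, h2⟩; exact ⟨h2, not_not.mpr h1⟩
    rw [h1, reindex_pair j i (Ne.symm hij)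
      (fun s => (((d - 1).choose s.card : ℕ) : ℝ)⁻¹ * (v (insert i s) - v s)),
      filter_and_comm (fun t => j ∉ t) (fun t => i ∉ t)]
    apply Finset.sum_congr rfl
    intro t ht
    simp only [mem_filter, mem_univ, true_and] at ht
    rw [card_insert_of_notMem ht.2]

lemma shapley_diff (hd : 2 ≤ d) (v : Finset (Fin d) → ℝ) (i j : Fin d) (hij : i ≠ j) :
    (d : ℝ) * (shapley v i - shapley v j)
      = ∑ t ∈ univ.filter (fun t : Finset (Fin d) => i ∉ t ∧ j ∉ t),
          ((((d - 1).choose t.card : ℕ) : ℝ)⁻¹ + (((d - 1).choose (t.card + 1) : ℕ) : ℝ)⁻¹)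
            * (v (insert i t) - v (insert j t)) := by
  rw [mul_sub, split_shapley hd v i j hij, split_shapley hd v j i (Ne.symm hij),
    filter_and_comm (fun t => j ∉ t) (fun t => i ∉ t), ← Finset.sum_sub_distrib]
  apply Finset.sum_congr rfl
  intro t ht
  rw [Finset.insert_comm j i t]
  ring

lemma card_le_T (i j : Fin d) (hij : i ≠ j) (t : Finset (Fin d))
    (hi : i ∉ t) (hj : j ∉ t) : t.card ≤ d - 2 := by
  have hsub : t ⊆ (univ.erase j).erase i := by
    intro x hx
    rw [mem_erase, mem_erase]
    exact ⟨fun h => hi (h ▸ hx), fun h => hj (h ▸ hx), mem_univ x⟩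
  have hc := Finset.card_le_card hsub
  rw [Finset.card_erase_of_mem (by rw [mem_erase]; exact ⟨hij, mem_univ i⟩),
    Finset.card_erase_of_mem (mem_univ j), Finset.card_univ, Fintype.card_fin] at hc
  omega

lemma count_sum (hd : 2 ≤ d) (i j : Fin d) (hij : i ≠ j) :
    ∑ t ∈ univ.filter (fun t : Finset (Fin d) => i ∉ t ∧ j ∉ t), W d (t.card + 1)
      = ((d : ℝ) - 1) / d := by
  have hfil : univ.filter (fun t : Finset (Fin d) => i ∉ t ∧ j ∉ t)
      = ((univ.erase j).erase i).powerset := by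
    ext t
    simp only [mem_filter, mem_univ, true_and, mem_powerset]
    constructor
    · rintro ⟨hi, hj⟩ x hx
      rw [mem_erase, mem_erase]
      exact ⟨fun h => hi (h ▸ hx), fun h => hj (h ▸ hx), mem_univ x⟩
    · intro h
      constructor
      · intro hi
        have := h hi
        rw [mem_erase] at this
        exact this.1 rfl
      · intro hj
        have := h hj
        rw [mem_erase, mem_erase] at this
        exact this.2.1 rfl
  have hA : ((univ.erase j).erase i).card = d - 2 := by
    rw [Finset.card_erase_of_mem (by rw [mem_erase]; exact ⟨hij, mem_univ i⟩),
      Finset.card_erase_of_mem (mem_univ j), Finset.card_univ, Fintype.card_fin]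
    omega
  rw [hfil, Finset.sum_powerset]
  rw [Finset.sum_congr rfl (fun k _ =>
    Finset.sum_powersetCard k ((univ.erase j).erase i) (fun m => W d (m + 1)))]
  rw [hA]
  rw [Finset.sum_congr rfl (fun k hk => by
    rw [nsmul_eq_mul, count_W d k hd (by rw [Finset.mem_range] at hk; omega)])]
  rw [Finset.sum_const, Finset.card_range, nsmul_eq_mul]
  have hcast : ((d - 2 + 1 : ℕ) : ℝ) = (d : ℝ) - 1 := by
    rw [show d - 2 + 1 = d - 1 by omega, Nat.cast_sub (by omega)]
    norm_num
  rw [hcast]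
  ring

end Stmt18

namespace Stmt18

lemma grad_eq (hd : 2 ≤ d) (v : Finset (Fin d) → ℝ) (i j : Fin d) :
    ∑ s ∈ univ.filter (fun s : Finset (Fin d) => i ∈ s),
        W d s.card * ((v s - v ∅) - ∑ l ∈ s, shapley v l)
      = ∑ s ∈ univ.filter (fun s : Finset (Fin d) => j ∈ s),
          W d s.card * ((v s - v ∅) - ∑ l ∈ s, shapley v l) := by
  rcases eq_or_ne i j with rfl | hij
  · rfl
  set F : Finset (Fin d) → ℝ :=
    fun s => W d s.card * ((v s - v ∅) - ∑ l ∈ s, shapley v l) with hF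
  have hsplit : ∀ k m : Fin d,
      ∑ s ∈ univ.filter (fun s : Finset (Fin d) => k ∈ s), F s
        = (∑ s ∈ univ.filter (fun s : Finset (Fin d) => k ∈ s ∧ m ∈ s), F s)
          + ∑ s ∈ univ.filter (fun s : Finset (Fin d) => k ∈ s ∧ m ∉ s), F s := by
    intro k m
    rw [← Finset.sum_filter_add_sum_filter_not
      (univ.filter (fun s : Finset (Fin d) => k ∈ s)) (fun s => m ∈ s),
      Finset.filter_filter, Finset.filter_filter]
  rw [hsplit i j, hsplit j i, filter_and_comm (fun s => j ∈ s) (fun s => i ∈ s)]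
  congr 1
  rw [reindex_pair i j hij F, reindex_pair j i (Ne.symm hij) F,
    filter_and_comm (fun t => j ∉ t) (fun t => i ∉ t)]
  rw [← sub_eq_zero, ← Finset.sum_sub_distrib]
  have step : ∀ t ∈ univ.filter (fun t : Finset (Fin d) => i ∉ t ∧ j ∉ t),
      F (insert i t) - F (insert j t)
        = (((d : ℝ) - 1) / (d : ℝ) ^ 2)
            * (((((d - 1).choose t.card : ℕ) : ℝ)⁻¹
                + (((d - 1).choose (t.card + 1) : ℕ) : ℝ)⁻¹)
              * (v (insert i t) - v (insert j t)))
          - (shapley v i - shapley v j) * W d (t.card + 1) := by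
    intro t ht
    simp only [mem_filter, mem_univ, true_and] at ht
    have hci : (insert i t).card = t.card + 1 := card_insert_of_notMem ht.1
    have hcj : (insert j t).card = t.card + 1 := card_insert_of_notMem ht.2
    have hsi : ∑ l ∈ insert i t, shapley v l = shapley v i + ∑ l ∈ t, shapley v l :=
      Finset.sum_insert ht.1
    have hsj : ∑ l ∈ insert j t, shapley v l = shapley v j + ∑ l ∈ t, shapley v l :=
      Finset.sum_insert ht.2
    have hW := W_eq d t.card hd (card_le_T i j hij t ht.1 ht.2)
    rw [hF]
    simp only
    rw [hci, hcj, hsi, hsj, hW]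
    ring
  rw [Finset.sum_congr rfl step, Finset.sum_sub_distrib, ← Finset.mul_sum,
    ← shapley_diff hd v i j hij, ← Finset.mul_sum]
  have hcs : ∑ t ∈ univ.filter (fun t : Finset (Fin d) => i ∉ t ∧ j ∉ t), W d (t.card + 1)
      = ((d : ℝ) - 1) / d := count_sum hd i j hij
  rw [hcs]
  have hd0 : (d : ℝ) ≠ 0 := by
    have h : (0 : ℝ) < d := by exact_mod_cast (by omega : 0 < d)
    exact ne_of_gt h
  field_simp
  ring

end Stmt18

/-- Least-squares characterization of Shapley values: the exact Shapley values
minimize the weighted least squares objective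
`∑_{0<|s|<d} w(s)(v(s) - v(∅) - sᵀφ)²` with Shapley kernel weights
`w(s) = (d-1)/(C(d,|s|)|s|(d-|s|))`, subject to the efficiency constraint
`1ᵀφ = v(1) - v(0)`; moreover the constrained minimizer is unique. -/
theorem stmt_18 (d : ℕ) (hd : 2 ≤ d) (v : Finset (Fin d) → ℝ) :
    let w : Finset (Fin d) → ℝ := fun s =>
      ((d : ℝ) - 1) / ((Nat.choose d s.card : ℝ) * s.card * ((d : ℝ) - s.card))
    let Obj : (Fin d → ℝ) → ℝ := fun φ =>
      ∑ s ∈ Finset.univ.filter (fun s : Finset (Fin d) => 0 < s.card ∧ s.card < d),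
        w s * (v s - v ∅ - ∑ j ∈ s, φ j) ^ 2
    let φv : Fin d → ℝ := fun i => shapley v i
    (∑ i, φv i = v Finset.univ - v ∅) ∧
      (∀ ψ : Fin d → ℝ, (∑ i, ψ i = v Finset.univ - v ∅) → Obj φv ≤ Obj ψ) ∧
      (∀ ψ : Fin d → ℝ, (∑ i, ψ i = v Finset.univ - v ∅) → Obj ψ ≤ Obj φv →
        ψ = φv) := by
  intro w Obj φv
  have hd0 : (d : ℝ) ≠ 0 := by
    have h : (0 : ℝ) < d := by exact_mod_cast (by omega : 0 < d)
    exact ne_of_gt h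
  have hwW : ∀ s : Finset (Fin d), w s = Stmt18.W d s.card := fun s => rfl
  have hφv : ∀ m : Fin d, φv m = shapley v m := fun m => rfl
  have hw0 : ∀ s : Finset (Fin d), ¬(0 < s.card ∧ s.card < d) → w s = 0 := by
    intro s hs
    have hle : s.card ≤ d := by
      have h := Finset.card_le_univ s
      rwa [Fintype.card_fin] at h
    have hws : w s = ((d : ℝ) - 1)
        / ((d.choose s.card : ℕ) * (s.card : ℝ) * ((d : ℝ) - s.card)) := rfl
    rcases Nat.eq_zero_or_pos s.card with h0 | hpos
    · rw [hws, h0]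
      norm_num
    · have hcd : s.card = d := by omega
      rw [hws, hcd]
      simp
  have hw_nonneg : ∀ s : Finset (Fin d), 0 ≤ w s := by
    intro s
    have hle : (s.card : ℝ) ≤ d := by
      have h := Finset.card_le_univ s
      rw [Fintype.card_fin] at h
      exact_mod_cast h
    have h2 : (2 : ℝ) ≤ d := by exact_mod_cast hd
    have hws : w s = ((d : ℝ) - 1)
        / ((d.choose s.card : ℕ) * (s.card : ℝ) * ((d : ℝ) - s.card)) := rfl
    rw [hws]
    apply div_nonneg (by linarith)
    apply mul_nonneg (mul_nonneg (by positivity) (by positivity))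
    linarith
  have obj_ext : ∀ φ : Fin d → ℝ,
      Obj φ = ∑ s : Finset (Fin d), w s * (v s - v ∅ - ∑ l ∈ s, φ l) ^ 2 := by
    intro φ
    have h : Obj φ = ∑ s ∈ univ.filter (fun s : Finset (Fin d) => 0 < s.card ∧ s.card < d),
        w s * (v s - v ∅ - ∑ l ∈ s, φ l) ^ 2 := rfl
    rw [h, Finset.sum_filter]
    apply Finset.sum_congr rfl
    intro s _
    by_cases hp : 0 < s.card ∧ s.card < d
    · rw [if_pos hp]
    · rw [if_neg hp, hw0 s hp, zero_mul]
  have heff : ∑ l, φv l = v univ - v ∅ := Stmt18.efficiency hd v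
  have hgrad : ∀ h : Fin d → ℝ, (∑ l, h l = 0) →
      ∑ s : Finset (Fin d), w s * (v s - v ∅ - ∑ l ∈ s, φv l) * (∑ l ∈ s, h l) = 0 := by
    intro h hsum
    have e1 : ∀ s : Finset (Fin d),
        w s * (v s - v ∅ - ∑ l ∈ s, φv l) * (∑ l ∈ s, h l)
          = ∑ l : Fin d,
              (if l ∈ s then w s * (v s - v ∅ - ∑ m ∈ s, φv m) * h l else 0) := by
      intro s
      rw [Finset.sum_ite_mem, Finset.univ_inter, ← Finset.mul_sum]
    simp_rw [e1]
    rw [Finset.sum_comm]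
    have e2 : ∀ l : Fin d,
        (∑ s : Finset (Fin d),
            if l ∈ s then w s * (v s - v ∅ - ∑ m ∈ s, φv m) * h l else 0)
          = h l * ∑ s ∈ univ.filter (fun s : Finset (Fin d) => (⟨0, by omega⟩ : Fin d) ∈ s),
              Stmt18.W d s.card * ((v s - v ∅) - ∑ m ∈ s, shapley v m) := by
      intro l
      rw [← Finset.sum_filter]
      have e2a : ∀ s ∈ univ.filter (fun s : Finset (Fin d) => l ∈ s),
          w s * (v s - v ∅ - ∑ m ∈ s, φv m) * h l
            = h l * (Stmt18.W d s.card * ((v s - v ∅) - ∑ m ∈ s, shapley v m)) := by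
        intro s _
        simp only [hφv, hwW]
        ring
      rw [Finset.sum_congr rfl e2a, ← Finset.mul_sum,
        Stmt18.grad_eq hd v l ⟨0, by omega⟩]
    simp_rw [e2]
    rw [← Finset.sum_mul, hsum, zero_mul]
  have decomp : ∀ ψ : Fin d → ℝ, (∑ l, ψ l = v univ - v ∅) →
      Obj ψ = Obj φv + ∑ s : Finset (Fin d), w s * (∑ l ∈ s, (ψ l - φv l)) ^ 2 := by
    intro ψ hψ
    have hs0 : ∑ l, (ψ l - φv l) = 0 := by
      rw [Finset.sum_sub_distrib, hψ, heff, sub_self]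
    have hg := hgrad (fun l => ψ l - φv l) hs0
    rw [obj_ext ψ, obj_ext φv]
    have e3 : ∀ s ∈ (univ : Finset (Finset (Fin d))),
        w s * (v s - v ∅ - ∑ l ∈ s, ψ l) ^ 2
          = w s * (v s - v ∅ - ∑ l ∈ s, φv l) ^ 2
            + w s * (∑ l ∈ s, (ψ l - φv l)) ^ 2
            - 2 * (w s * (v s - v ∅ - ∑ l ∈ s, φv l) * (∑ l ∈ s, (ψ l - φv l))) := by
      intro s _
      have hsplit : ∑ l ∈ s, ψ l = (∑ l ∈ s, φv l) + ∑ l ∈ s, (ψ l - φv l) := by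
        rw [← Finset.sum_add_distrib]
        apply Finset.sum_congr rfl
        intro l _
        ring
      rw [hsplit]
      ring
    rw [Finset.sum_congr rfl e3, Finset.sum_sub_distrib, Finset.sum_add_distrib,
      ← Finset.mul_sum, hg]
    ring
  refine ⟨heff, ?_, ?_⟩
  · intro ψ hψ
    rw [decomp ψ hψ]
    have hQ : 0 ≤ ∑ s : Finset (Fin d), w s * (∑ l ∈ s, (ψ l - φv l)) ^ 2 :=
      Finset.sum_nonneg fun s _ => mul_nonneg (hw_nonneg s) (sq_nonneg _)
    linarith
  · intro ψ hψ hobj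
    rw [decomp ψ hψ] at hobj
    have hQ : ∑ s : Finset (Fin d), w s * (∑ l ∈ s, (ψ l - φv l)) ^ 2 ≤ 0 := by linarith
    funext i
    have hterm : w {i} * (∑ l ∈ ({i} : Finset (Fin d)), (ψ l - φv l)) ^ 2
        ≤ ∑ s : Finset (Fin d), w s * (∑ l ∈ s, (ψ l - φv l)) ^ 2 :=
      Finset.single_le_sum (f := fun s => w s * (∑ l ∈ s, (ψ l - φv l)) ^ 2)
        (fun s _ => mul_nonneg (hw_nonneg s) (sq_nonneg _))
        (mem_univ ({i} : Finset (Fin d)))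
    rw [Finset.sum_singleton] at hterm
    have hws : (0 : ℝ) < w {i} := by
      have hr : w {i} = ((d : ℝ) - 1)
          / ((d.choose ({i} : Finset (Fin d)).card : ℕ)
              * ((({i} : Finset (Fin d)).card : ℕ) : ℝ)
              * ((d : ℝ) - (({i} : Finset (Fin d)).card : ℕ))) := rfl
      rw [hr, Finset.card_singleton, Nat.choose_one_right]
      have h2 : (2 : ℝ) ≤ d := by exact_mod_cast hd
      apply div_pos (by linarith)
      push_cast
      nlinarith
    have hle : w {i} * (ψ i - φv i) ^ 2 ≤ 0 := le_trans hterm hQ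
    have hsq : (ψ i - φv i) ^ 2 = 0 := by nlinarith [sq_nonneg (ψ i - φv i)]
    have hz := (pow_eq_zero_iff (by norm_num : (2 : ℕ) ≠ 0)).mp hsq
    linarith [hz]
end
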